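/- Let d, L, W ∈ ℕ with L, W ≥ 2, R ≥ 1, a < b, let σ : ℝ → ℝ be three times continuously differentiable with σ, σ', σ'', σ''' bounded, and let θ, ϑ be parameters of neural networks with activation σ, the same architecture with at most L layers, widths at most W (with l_0 = d), and all weights and biases in [−R,R]. Set α = max{1,|a|,|b|,‖σ‖_∞} and β = max{1,‖σ'‖_∞,‖σ''‖_∞,‖σ'''‖_∞}, and for 1 ≤ k ≤ L write J_k^θ(x) and H_k^θ(x) for the layer-k Jacobian and Hessian evaluated at the output of the first k−1 layers, and (·)_i for the i-th component slice. Then for all 1 ≤ k ≤ L, all x ∈ [a,b]^d and all components i: ‖J_k^θ(x)_i − J_k^ϑ(x)_i‖_∞ ≤ β ( 1 + α(d+4) W^{k−1} R^k β^{k−1} + R(αW+1) ) ‖θ−ϑ‖_∞ and ‖H_k^θ(x)_i − H_k^ϑ(x)_i‖_∞ ≤ 2βR ( 1 + α(d+4) W^{k−1} R^k β^{k−1} + R(αW+1) ) ‖θ−ϑ‖_∞, where ‖·‖_∞ on matrices and tensors is the entrywise supremum norm and ‖θ−ϑ‖_∞ the maximal entrywise difference of weights and biases. -/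

import Mathlib

/-- Parameters (weights and biases) of a fully connected network with widths `l`. -/
abbrev NNParams (l : ℕ → ℕ) : Type :=
  ∀ k : ℕ, (Fin (l (k + 1)) → Fin (l k) → ℝ) × (Fin (l (k + 1)) → ℝ)

/-- The affine map `z ↦ W_k z + b_k` of layer `k`. -/
noncomputable def layerAffine {l : ℕ → ℕ} (A : NNParams l) (k : ℕ)
    (z : Fin (l k) → ℝ) (i : Fin (l (k + 1))) : ℝ :=
  ∑ j, (A k).1 i j * z j + (A k).2 i

/-- Layer map number `k` (layers are numbered `0,…,L-1`): the activation `σ` is applied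
after the affine map in every layer except the last one, which is purely affine. -/
noncomputable def layerFun (σ : ℝ → ℝ) (L : ℕ) {l : ℕ → ℕ} (A : NNParams l) (k : ℕ)
    (z : Fin (l k) → ℝ) (i : Fin (l (k + 1))) : ℝ :=
  if k + 1 = L then layerAffine A k z i else σ (layerAffine A k z i)

/-- Output of the first `K` layers of the network with `L` layers. -/
noncomputable def nnFwd (σ : ℝ → ℝ) (L : ℕ) {l : ℕ → ℕ} (A : NNParams l) :
    (K : ℕ) → (Fin (l 0) → ℝ) → Fin (l K) → ℝ
  | 0, z => z
  | K + 1, z => layerFun σ L A K (nnFwd σ L A K z)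

/-- `J_{k+1}^θ(x)`: Jacobian matrix of layer number `k` evaluated at the output of the
previous layers. -/
noncomputable def layerJac (σ : ℝ → ℝ) (L : ℕ) {l : ℕ → ℕ} (A : NNParams l) (k : ℕ)
    (x : Fin (l 0) → ℝ) (i : Fin (l (k + 1))) (j : Fin (l k)) : ℝ :=
  fderiv ℝ (fun z => layerFun σ L A k z i) (nnFwd σ L A k x) (Pi.single j 1)

/-- `H_{k+1}^θ(x)`: Hessian tensor of layer number `k` evaluated at the output of the
previous layers. -/
noncomputable def layerHess (σ : ℝ → ℝ) (L : ℕ) {l : ℕ → ℕ} (A : NNParams l) (k : ℕ)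
    (x : Fin (l 0) → ℝ) (i : Fin (l (k + 1))) (j j' : Fin (l k)) : ℝ :=
  fderiv ℝ (fun z => fderiv ℝ (fun w => layerFun σ L A k w i) z (Pi.single j 1))
    (nnFwd σ L A k x) (Pi.single j' 1)

/-- All weights and biases of the first `L` layers lie in `[-R, R]`. -/
def NNParams.inCube {l : ℕ → ℕ} (A : NNParams l) (L : ℕ) (R : ℝ) : Prop :=
  ∀ k < L, (∀ i j, |(A k).1 i j| ≤ R) ∧ (∀ i, |(A k).2 i| ≤ R)

/-- Supremum distance `‖θ − ϑ‖_∞` between the entries of two parameter vectors. -/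
noncomputable def paramDist {l : ℕ → ℕ} (L : ℕ) (A B : NNParams l) : ℝ :=
  ⨆ k : Fin L, max (⨆ i, ⨆ j, |(A (k : ℕ)).1 i j - (B (k : ℕ)).1 i j|)
    (⨆ i, |(A (k : ℕ)).2 i - (B (k : ℕ)).2 i|)

/-!
Both layer derivatives are explicit in the pre-activation `s = W_k F(x) + b_k`: with `g` the
activation of the layer (`σ`, or the identity for the output layer), `J_{ij} = g'(s_i) W_{ij}`
and `H_{ijj'} = g''(s_i) W_{ij'} W_{ij}`. Splitting `u a - u' a' = (u - u') a + u' (a - a')`,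
their difference for two parameters is bounded through `‖θ - ϑ‖_∞` and the difference of the
pre-activations, on which `g'` and `g''` are `β`-Lipschitz. The latter propagates through the
network: the outputs of the first `m` layers differ by at most `c_m ‖θ - ϑ‖_∞`, where
`c_0 = 0`, `c_{m+1} = β (l_m (α + R c_m) + 1)`, and this affine recursion grows like
`(W R β)^m`, which produces the constant of the statement.
-/

open Finset

section RealLemmas

theorem abs_mul_sub_mul_le {u u' a a' M N K ε : ℝ} (hu : |u - u'| ≤ M) (ha : |a| ≤ N)
    (hu' : |u'| ≤ K) (ha' : |a - a'| ≤ ε) : |u * a - u' * a'| ≤ M * N + K * ε := by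
  calc |u * a - u' * a'| = |(u - u') * a + u' * (a - a')| := by ring_nf
    _ ≤ |u - u'| * |a| + |u'| * |a - a'| := by
        rw [← abs_mul, ← abs_mul]; exact abs_add_le _ _
    _ ≤ M * N + K * ε := by
        gcongr
        · exact (abs_nonneg _).trans hu
        · exact (abs_nonneg _).trans hu'

theorem abs_sub_le_of_abs_deriv_le {f : ℝ → ℝ} {C : ℝ} (hf : Differentiable ℝ f)
    (hC : ∀ t, |deriv f t| ≤ C) (s t : ℝ) : |f s - f t| ≤ C * |s - t| :=
  Convex.norm_image_sub_le_of_norm_deriv_le (fun x _ => hf x) (fun x _ => hC x) convex_univ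
    trivial trivial

theorem add_le_pow_mul_of_le_add_mul {u : ℕ → ℝ} {p q c : ℝ} (hq : 0 ≤ q)
    (hc : p + c ≤ q * c) (hu : ∀ m, u (m + 1) ≤ p + q * u m) (m : ℕ) :
    u m + c ≤ q ^ m * (u 0 + c) := by
  induction m with
  | zero => simp
  | succ m ih =>
    calc u (m + 1) + c ≤ q * (u m + c) := by linarith [hu m]
      _ ≤ q * (q ^ m * (u 0 + c)) := mul_le_mul_of_nonneg_left ih hq
      _ = q ^ (m + 1) * (u 0 + c) := by ring

end RealLemmas

section Calculus

variable {l : ℕ → ℕ}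

theorem hasFDerivAt_layerAffine (A : NNParams l) (k : ℕ) (z : Fin (l k) → ℝ)
    (i : Fin (l (k + 1))) :
    HasFDerivAt (fun w => layerAffine A k w i)
      (∑ j, (A k).1 i j • (ContinuousLinearMap.proj j : (Fin (l k) → ℝ) →L[ℝ] ℝ))
      z := by
  unfold layerAffine
  refine (HasFDerivAt.fun_sum fun j _ => ?_).add_const _
  exact (hasFDerivAt_apply j z).const_mul ((A k).1 i j)

theorem fderiv_comp_layerAffine_single {g : ℝ → ℝ} (hg : Differentiable ℝ g)
    (A : NNParams l) (k : ℕ) (z : Fin (l k) → ℝ) (i : Fin (l (k + 1))) (j : Fin (l k)) :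
    fderiv ℝ (fun w => g (layerAffine A k w i)) z (Pi.single j 1)
      = deriv g (layerAffine A k z i) * (A k).1 i j := by
  have h := (hg _).hasDerivAt.comp_hasFDerivAt z (hasFDerivAt_layerAffine A k z i)
  rw [Function.comp_def] at h
  rw [h.fderiv]
  simp [Pi.single_apply, mul_comm]

theorem fderiv_fderiv_comp_layerAffine_single {g : ℝ → ℝ} (hg : Differentiable ℝ g)
    (hg' : Differentiable ℝ (deriv g)) (A : NNParams l) (k : ℕ) (z : Fin (l k) → ℝ)
    (i : Fin (l (k + 1))) (j j' : Fin (l k)) :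
    fderiv ℝ (fun y => fderiv ℝ (fun w => g (layerAffine A k w i)) y (Pi.single j 1)) z
        (Pi.single j' 1)
      = deriv (deriv g) (layerAffine A k z i) * (A k).1 i j' * (A k).1 i j := by
  simp only [fderiv_comp_layerAffine_single hg]
  rw [fderiv_comp_layerAffine_single (hg'.mul_const _), deriv_mul_const (hg' _), mul_right_comm]

end Calculus

section Layers

variable {σ : ℝ → ℝ} {L : ℕ} {l : ℕ → ℕ}

def layerAct (σ : ℝ → ℝ) (L k : ℕ) : ℝ → ℝ :=
  if k + 1 = L then id else σ

theorem layerFun_eq_layerAct (A : NNParams l) (k : ℕ) (z : Fin (l k) → ℝ)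
    (i : Fin (l (k + 1))) : layerFun σ L A k z i = layerAct σ L k (layerAffine A k z i) := by
  unfold layerFun layerAct
  split_ifs <;> rfl

theorem layerAct_cases {P : (ℝ → ℝ) → Prop} (hid : P id) (hσ : P σ) (k : ℕ) :
    P (layerAct σ L k) := by
  unfold layerAct
  split_ifs
  exacts [hid, hσ]

theorem layerJac_eq (hσ : Differentiable ℝ σ) (A : NNParams l) (k : ℕ) (x : Fin (l 0) → ℝ)
    (i : Fin (l (k + 1))) (j : Fin (l k)) :
    layerJac σ L A k x i j
      = deriv (layerAct σ L k) (layerAffine A k (nnFwd σ L A k x) i) * (A k).1 i j := by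
  simp only [layerJac, layerFun_eq_layerAct]
  exact fderiv_comp_layerAffine_single (layerAct_cases differentiable_id hσ k) A k _ i j

theorem layerHess_eq (hσ : ContDiff ℝ 2 σ) (A : NNParams l) (k : ℕ) (x : Fin (l 0) → ℝ)
    (i : Fin (l (k + 1))) (j j' : Fin (l k)) :
    layerHess σ L A k x i j j'
      = deriv (deriv (layerAct σ L k)) (layerAffine A k (nnFwd σ L A k x) i)
          * (A k).1 i j' * (A k).1 i j := by
  have hg : ContDiff ℝ 2 (layerAct σ L k) := layerAct_cases contDiff_id hσ k
  have hg' : Differentiable ℝ (deriv (layerAct σ L k)) := by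
    simpa using hg.differentiable_iteratedDeriv 1 (by norm_num)
  simp only [layerHess, layerFun_eq_layerAct]
  exact fderiv_fderiv_comp_layerAffine_single (hg.differentiable (by norm_num)) hg' A k _ i j j'

end Layers

section ActivationBounds

variable {σ : ℝ → ℝ} {L : ℕ} {β : ℝ}

theorem abs_deriv_iterate_succ_id_le (n : ℕ) (t : ℝ) : |deriv^[n + 1] id t| ≤ 1 := by
  rw [Function.iterate_succ_apply, deriv_id']
  cases n with
  | zero => simp
  | succ n =>
    rw [Function.iterate_succ_apply, deriv_const',
      Function.iterate_fixed (f := deriv) (x := fun _ : ℝ => (0 : ℝ)) (deriv_const' 0)]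
    simp

theorem abs_deriv_iterate_succ_layerAct_le {n : ℕ} (hβ : 1 ≤ β)
    (hσ : ∀ t, |deriv^[n + 1] σ t| ≤ β) (k : ℕ) (t : ℝ) :
    |deriv^[n + 1] (layerAct σ L k) t| ≤ β :=
  layerAct_cases (P := fun g => ∀ t, |deriv^[n + 1] g t| ≤ β)
    (fun t => (abs_deriv_iterate_succ_id_le n t).trans hβ) hσ k t

theorem abs_deriv_iterate_layerAct_sub_le {n : ℕ} (hσ : ContDiff ℝ (n + 1) σ) (hβ : 1 ≤ β)
    (hσβ : ∀ t, |deriv^[n + 1] σ t| ≤ β) (k : ℕ) (s t : ℝ) :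
    |deriv^[n] (layerAct σ L k) s - deriv^[n] (layerAct σ L k) t| ≤ β * |s - t| := by
  have hg : Differentiable ℝ (deriv^[n] (layerAct σ L k)) := by
    simpa [iteratedDeriv_eq_iterate] using
      (layerAct_cases contDiff_id hσ k).differentiable_iteratedDeriv' n
  refine abs_sub_le_of_abs_deriv_le hg (fun t => ?_) s t
  rw [← Function.iterate_succ_apply' deriv]
  exact abs_deriv_iterate_succ_layerAct_le hβ hσβ k t

end ActivationBounds

section ParamDist

variable {l : ℕ → ℕ} {L : ℕ} {A B : NNParams l}

theorem paramDist_nonneg : 0 ≤ paramDist L A B :=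
  Real.iSup_nonneg fun _ =>
    le_max_of_le_right (Real.iSup_nonneg fun _ => abs_nonneg _)

theorem abs_weight_sub_le_paramDist {k : ℕ} (hk : k < L) (i : Fin (l (k + 1))) (j : Fin (l k)) :
    |(A k).1 i j - (B k).1 i j| ≤ paramDist L A B :=
  le_ciSup_of_le (Finite.bddAbove_range _) ⟨k, hk⟩ <| le_max_of_le_left <|
    le_ciSup_of_le (Finite.bddAbove_range _) i <| le_ciSup_of_le (Finite.bddAbove_range _) j le_rfl

theorem abs_bias_sub_le_paramDist {k : ℕ} (hk : k < L) (i : Fin (l (k + 1))) :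
    |(A k).2 i - (B k).2 i| ≤ paramDist L A B :=
  le_ciSup_of_le (Finite.bddAbove_range _) ⟨k, hk⟩ <| le_max_of_le_right <|
    le_ciSup_of_le (Finite.bddAbove_range _) i le_rfl

end ParamDist

def fwdDiffCoeff (l : ℕ → ℕ) (α β R : ℝ) : ℕ → ℝ
  | 0 => 0
  | m + 1 => β * (l m * (α + R * fwdDiffCoeff l α β R m) + 1)

def affineDiffCoeff (l : ℕ → ℕ) (α β R : ℝ) (k : ℕ) : ℝ :=
  l k * (α + R * fwdDiffCoeff l α β R k) + 1

section DiffCoeff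

variable {l : ℕ → ℕ} {α β R : ℝ}

theorem fwdDiffCoeff_succ (m : ℕ) :
    fwdDiffCoeff l α β R (m + 1) = β * affineDiffCoeff l α β R m := rfl

theorem fwdDiffCoeff_nonneg (hα : 0 ≤ α) (hβ : 0 ≤ β) (hR : 0 ≤ R) :
    ∀ m, 0 ≤ fwdDiffCoeff l α β R m
  | 0 => le_rfl
  | m + 1 => by
    have := fwdDiffCoeff_nonneg hα hβ hR m
    simp only [fwdDiffCoeff]
    positivity

-- `3α` dominates the fixed point `β (Wα + 1) / (WRβ - 1)` of the recursion, so the shifted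
-- coefficients grow geometrically with ratio `WRβ`.
theorem fwdDiffCoeff_succ_add_le {W : ℕ} (hα : 1 ≤ α) (hβ : 1 ≤ β) (hR : 1 ≤ R)
    (hW : 2 ≤ W) (hlW : ∀ k, 0 < k → l k ≤ W) (m : ℕ) :
    fwdDiffCoeff l α β R (m + 1) + 3 * α ≤ (W * R * β) ^ m * (α * β * (l 0 + 4)) := by
  have hc_nonneg := fwdDiffCoeff_nonneg (l := l) (zero_le_one.trans hα) (zero_le_one.trans hβ)
    (zero_le_one.trans hR)
  have hW' : (2 : ℝ) ≤ W := by exact_mod_cast hW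
  have hc : β * (W * α + 1) + 3 * α ≤ W * R * β * (3 * α) := by
    nlinarith [mul_le_mul_of_nonneg_left hR (by positivity : (0 : ℝ) ≤ W * β * α),
      mul_le_mul_of_nonneg_left hW' (by positivity : (0 : ℝ) ≤ β * α),
      mul_le_mul_of_nonneg_left hα (by positivity : (0 : ℝ) ≤ β),
      mul_le_mul_of_nonneg_left hβ (by positivity : (0 : ℝ) ≤ α)]
  have hu : ∀ m, fwdDiffCoeff l α β R (m + 2)
      ≤ β * (W * α + 1) + W * R * β * fwdDiffCoeff l α β R (m + 1) := fun m => by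
    have hlm : (l (m + 1) : ℝ) ≤ W := by exact_mod_cast hlW (m + 1) m.succ_pos
    have := hc_nonneg (m + 1)
    calc fwdDiffCoeff l α β R (m + 2)
        = β * (l (m + 1) * (α + R * fwdDiffCoeff l α β R (m + 1)) + 1) := fwdDiffCoeff_succ _
      _ ≤ β * (W * (α + R * fwdDiffCoeff l α β R (m + 1)) + 1) := by gcongr
      _ = _ := by ring
  have hu0 : fwdDiffCoeff l α β R 1 + 3 * α ≤ α * β * (l 0 + 4) := by
    simp only [fwdDiffCoeff]
    nlinarith [mul_le_mul_of_nonneg_left hα (by positivity : (0 : ℝ) ≤ β),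
      mul_le_mul_of_nonneg_left hβ (by positivity : (0 : ℝ) ≤ α)]
  exact (add_le_pow_mul_of_le_add_mul (u := fun m => fwdDiffCoeff l α β R (m + 1))
    (by positivity) hc hu m).trans (mul_le_mul_of_nonneg_left hu0 (by positivity))

theorem mul_affineDiffCoeff_le {W : ℕ} (hα : 1 ≤ α) (hβ : 1 ≤ β) (hR : 1 ≤ R)
    (hW : 2 ≤ W) (hlW : ∀ k, 0 < k → l k ≤ W) (k : ℕ) :
    R * affineDiffCoeff l α β R k
      ≤ α * (l 0 + 4) * (W : ℝ) ^ k * R ^ (k + 1) * β ^ k + R * (α * W + 1) := by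
  unfold affineDiffCoeff
  cases k with
  | zero =>
    simp only [fwdDiffCoeff, pow_zero, zero_add, pow_one, mul_zero, add_zero, mul_one]
    nlinarith [mul_le_mul_of_nonneg_left hα (by positivity : (0 : ℝ) ≤ R)]
  | succ m =>
    have hlm : (l (m + 1) : ℝ) ≤ W := by exact_mod_cast hlW (m + 1) m.succ_pos
    have hc := fwdDiffCoeff_succ_add_le (l := l) hα hβ hR hW hlW m
    have := fwdDiffCoeff_nonneg (l := l) (zero_le_one.trans hα) (zero_le_one.trans hβ)
      (zero_le_one.trans hR) (m + 1)
    calc R * (l (m + 1) * (α + R * fwdDiffCoeff l α β R (m + 1)) + 1)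
        ≤ R * (W * (α + R * fwdDiffCoeff l α β R (m + 1)) + 1) := by gcongr
      _ = R * (α * W + 1) + W * R ^ 2 * fwdDiffCoeff l α β R (m + 1) := by ring
      _ ≤ R * (α * W + 1) + W * R ^ 2 * ((W * R * β) ^ m * (α * β * (l 0 + 4))) := by
        gcongr; linarith
      _ = _ := by ring

end DiffCoeff

section ForwardPass

variable {σ : ℝ → ℝ} {L : ℕ} {l : ℕ → ℕ} {α β R : ℝ}

theorem abs_nnFwd_le (C : NNParams l) {x : Fin (l 0) → ℝ} (hx : ∀ i, |x i| ≤ α)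
    (hσ : ∀ t, |σ t| ≤ α) : ∀ m < L, ∀ i, |nnFwd σ L C m x i| ≤ α
  | 0, _, i => hx i
  | m + 1, hm, i => by
    simp only [nnFwd, layerFun, if_neg hm.ne]
    exact hσ _

theorem abs_layerAffine_sub_le {δ D : ℝ} (A B : NNParams l) (k : ℕ) {z z' : Fin (l k) → ℝ}
    (hz : ∀ j, |z j| ≤ α) (hzz' : ∀ j, |z j - z' j| ≤ D)
    (hB : ∀ i j, |(B k).1 i j| ≤ R)
    (hw : ∀ i j, |(A k).1 i j - (B k).1 i j| ≤ δ) (hb : ∀ i, |(A k).2 i - (B k).2 i| ≤ δ)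
    (i : Fin (l (k + 1))) :
    |layerAffine A k z i - layerAffine B k z' i| ≤ l k * (δ * α + R * D) + δ :=
  calc |layerAffine A k z i - layerAffine B k z' i|
      = |∑ j, ((A k).1 i j * z j - (B k).1 i j * z' j) + ((A k).2 i - (B k).2 i)| := by
        simp only [layerAffine, sum_sub_distrib]
        ring_nf
    _ ≤ ∑ j, |(A k).1 i j * z j - (B k).1 i j * z' j| + |(A k).2 i - (B k).2 i| :=
        (abs_add_le _ _).trans (add_le_add_left (abs_sum_le_sum_abs _ _) _)
    _ ≤ ∑ _j : Fin (l k), (δ * α + R * D) + δ :=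
        add_le_add (sum_le_sum fun j _ => abs_mul_sub_mul_le (hw i j) (hz j) (hB i j) (hzz' j))
          (hb i)
    _ = l k * (δ * α + R * D) + δ := by simp [mul_add]

theorem abs_layerAffine_nnFwd_sub_le (A : NNParams l) {B : NNParams l} (hB : B.inCube L R)
    {x : Fin (l 0) → ℝ}
    (hx : ∀ i, |x i| ≤ α) (hσ : ∀ t, |σ t| ≤ α) {k : ℕ} (hk : k < L)
    (hdiff : ∀ j, |nnFwd σ L A k x j - nnFwd σ L B k x j|
      ≤ fwdDiffCoeff l α β R k * paramDist L A B)
    (i : Fin (l (k + 1))) :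
    |layerAffine A k (nnFwd σ L A k x) i - layerAffine B k (nnFwd σ L B k x) i|
      ≤ affineDiffCoeff l α β R k * paramDist L A B :=
  (abs_layerAffine_sub_le A B k (abs_nnFwd_le A hx hσ k hk) hdiff (hB k hk).1
    (fun _ _ => abs_weight_sub_le_paramDist hk _ _) (fun _ => abs_bias_sub_le_paramDist hk _)
    i).trans_eq (by rw [affineDiffCoeff]; ring)

theorem abs_nnFwd_sub_le (A : NNParams l) {B : NNParams l} (hB : B.inCube L R)
    {x : Fin (l 0) → ℝ} (hx : ∀ i, |x i| ≤ α) (hσ : ∀ t, |σ t| ≤ α) (hβ : 0 ≤ β)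
    (hlip : ∀ k s t, |layerAct σ L k s - layerAct σ L k t| ≤ β * |s - t|) :
    ∀ m ≤ L, ∀ i,
      |nnFwd σ L A m x i - nnFwd σ L B m x i| ≤ fwdDiffCoeff l α β R m * paramDist L A B
  | 0, _, i => by simp [nnFwd, fwdDiffCoeff]
  | m + 1, hm, i => by
    have hdiff := abs_nnFwd_sub_le A hB hx hσ hβ hlip m (Nat.le_of_lt hm)
    simp only [nnFwd, layerFun_eq_layerAct, fwdDiffCoeff_succ, mul_assoc]
    exact (hlip _ _ _).trans
      (mul_le_mul_of_nonneg_left (abs_layerAffine_nnFwd_sub_le A hB hx hσ hm hdiff i) hβ)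

end ForwardPass

section LayerDerivativeDiff

variable {σ : ℝ → ℝ} {L : ℕ} {l : ℕ → ℕ} {β R S : ℝ} {A B : NNParams l} {k : ℕ}
  {x : Fin (l 0) → ℝ} {i : Fin (l (k + 1))}

theorem abs_layerJac_sub_le (hσ : Differentiable ℝ σ) (hA : A.inCube L R) (hk : k < L)
    (hS : |layerAffine A k (nnFwd σ L A k x) i - layerAffine B k (nnFwd σ L B k x) i| ≤ S)
    (hbd : ∀ t, |deriv (layerAct σ L k) t| ≤ β)
    (hlip : ∀ s t, |deriv (layerAct σ L k) s - deriv (layerAct σ L k) t| ≤ β * |s - t|)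
    (j : Fin (l k)) :
    |layerJac σ L A k x i j - layerJac σ L B k x i j| ≤ β * (R * S + paramDist L A B) := by
  have hβ : 0 ≤ β := (abs_nonneg _).trans (hbd 0)
  rw [layerJac_eq hσ, layerJac_eq hσ]
  exact (abs_mul_sub_mul_le ((hlip _ _).trans (mul_le_mul_of_nonneg_left hS hβ))
    ((hA k hk).1 i j) (hbd _) (abs_weight_sub_le_paramDist hk i j)).trans_eq (by ring)

theorem abs_layerHess_sub_le (hσ : ContDiff ℝ 2 σ) (hA : A.inCube L R) (hB : B.inCube L R)
    (hk : k < L)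
    (hS : |layerAffine A k (nnFwd σ L A k x) i - layerAffine B k (nnFwd σ L B k x) i| ≤ S)
    (hbd : ∀ t, |deriv (deriv (layerAct σ L k)) t| ≤ β)
    (hlip : ∀ s t, |deriv (deriv (layerAct σ L k)) s - deriv (deriv (layerAct σ L k)) t|
      ≤ β * |s - t|)
    (j j' : Fin (l k)) :
    |layerHess σ L A k x i j j' - layerHess σ L B k x i j j'|
      ≤ β * R * (R * S + 2 * paramDist L A B) := by
  have hβ : 0 ≤ β := (abs_nonneg _).trans (hbd 0)
  rw [layerHess_eq hσ, layerHess_eq hσ]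
  have hinner := abs_mul_sub_mul_le ((hlip _ _).trans (mul_le_mul_of_nonneg_left hS hβ))
    ((hA k hk).1 i j') (hbd _) (abs_weight_sub_le_paramDist (B := B) hk i j')
  refine (abs_mul_sub_mul_le hinner ((hA k hk).1 i j) (K := β * R) ?_
    (abs_weight_sub_le_paramDist hk i j)).trans_eq (by ring)
  rw [abs_mul]
  exact mul_le_mul (hbd _) ((hB k hk).1 i j') (abs_nonneg _) hβ

end LayerDerivativeDiff

theorem nn_jac_hess_lipschitz_in_params_general
    (d L W : ℕ) (hW : 2 ≤ W) (R : ℝ) (hR : 1 ≤ R)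
    (a b : ℝ)
    (σ : ℝ → ℝ) (hσ : ContDiff ℝ 3 σ)
    (hσbd : BddAbove (Set.range fun x => |σ x|))
    (hσ'bd : BddAbove (Set.range fun x => |deriv σ x|))
    (hσ''bd : BddAbove (Set.range fun x => |deriv (deriv σ) x|))
    (hσ'''bd : BddAbove (Set.range fun x => |deriv (deriv (deriv σ)) x|))
    (l : ℕ → ℕ) (hl0 : l 0 = d) (hlW : ∀ k, 0 < k → l k ≤ W)
    (A B : NNParams l) (hA : A.inCube L R) (hB : B.inCube L R)
    (α β : ℝ)
    (hα : α = max 1 (max |a| (max |b| (⨆ x : ℝ, |σ x|))))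
    (hβ : β = max 1 (max (⨆ x : ℝ, |deriv σ x|)
      (max (⨆ x : ℝ, |deriv (deriv σ) x|) (⨆ x : ℝ, |deriv (deriv (deriv σ)) x|)))) :
    ∀ k : ℕ, k < L →
      ∀ x : Fin (l 0) → ℝ, (∀ i, x i ∈ Set.Icc a b) →
        (∀ (i : Fin (l (k + 1))) (j : Fin (l k)),
          |layerJac σ L A k x i j - layerJac σ L B k x i j|
            ≤ β * (1 + α * (d + 4) * (W : ℝ) ^ k * R ^ (k + 1) * β ^ k
                + R * (α * W + 1)) * paramDist L A B) ∧
        (∀ (i : Fin (l (k + 1))) (j j' : Fin (l k)),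
          |layerHess σ L A k x i j j' - layerHess σ L B k x i j j'|
            ≤ 2 * β * R * (1 + α * (d + 4) * (W : ℝ) ^ k * R ^ (k + 1) * β ^ k
                + R * (α * W + 1)) * paramDist L A B) := by
  intro k hk x hx
  subst hl0
  have hα1 : 1 ≤ α := hα ▸ le_max_left _ _
  have hβ1 : 1 ≤ β := hβ ▸ le_max_left _ _
  have hσα : ∀ t, |σ t| ≤ α := fun t => hα ▸
    le_max_of_le_right (le_max_of_le_right (le_max_of_le_right (le_ciSup hσbd t)))
  have hσ1 : ∀ t, |deriv^[1] σ t| ≤ β := fun t => hβ ▸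
    le_max_of_le_right (le_max_of_le_left (le_ciSup hσ'bd t))
  have hσ2 : ∀ t, |deriv^[2] σ t| ≤ β := fun t => hβ ▸
    le_max_of_le_right (le_max_of_le_right (le_max_of_le_left (le_ciSup hσ''bd t)))
  have hσ3 : ∀ t, |deriv^[3] σ t| ≤ β := fun t => hβ ▸
    le_max_of_le_right (le_max_of_le_right (le_max_of_le_right (le_ciSup hσ'''bd t)))
  have hxα : ∀ i, |x i| ≤ α := fun i => hα ▸ le_max_of_le_right
    ((abs_le_max_abs_abs (hx i).1 (hx i).2).trans (max_le_max le_rfl (le_max_left _ _)))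
  have hS := abs_layerAffine_nnFwd_sub_le A hB hxα hσα hk (abs_nnFwd_sub_le A hB hxα hσα
    (by linarith) (abs_deriv_iterate_layerAct_sub_le (hσ.of_le (by norm_num)) hβ1 hσ1) k hk.le)
  have hRS := mul_le_mul_of_nonneg_right (mul_affineDiffCoeff_le hα1 hβ1 hR hW hlW k)
    (paramDist_nonneg (L := L) (A := A) (B := B))
  rw [mul_assoc] at hRS
  constructor
  · intro i j
    refine (abs_layerJac_sub_le (hσ.differentiable (by norm_num)) hA hk (hS i)
      (abs_deriv_iterate_succ_layerAct_le hβ1 hσ1 k)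
      (abs_deriv_iterate_layerAct_sub_le (hσ.of_le (by norm_num)) hβ1 hσ2 k) j).trans ?_
    nlinarith
  · intro i j j'
    refine (abs_layerHess_sub_le (hσ.of_le (by norm_num)) hA hB hk (hS i)
      (abs_deriv_iterate_succ_layerAct_le hβ1 hσ2 k)
      (abs_deriv_iterate_layerAct_sub_le hσ hβ1 hσ3 k) j j').trans ?_
    have hS0 := (abs_nonneg _).trans (hS i)
    have hβR : 0 ≤ β * R := by positivity
    nlinarith [mul_le_mul_of_nonneg_left hRS hβR, mul_nonneg hβR (mul_nonneg (by positivity) hS0)]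

/-- **Lipschitz continuity of the layerwise Jacobians and Hessians in the parameters.**
With `α = max{1,|a|,|b|,‖σ‖_∞}`, `β = max{1,‖σ'‖_∞,‖σ''‖_∞,‖σ'''‖_∞}`, for every layer
`k+1` (`0 ≤ k < L`), every `x ∈ [a,b]^d` and all indices `i, j, j'`:
`‖J_{k+1}^θ(x)_i − J_{k+1}^ϑ(x)_i‖_∞ ≤ β(1 + α(d+4)W^k R^{k+1} β^k + R(αW+1))‖θ−ϑ‖_∞`
and
`‖H_{k+1}^θ(x)_i − H_{k+1}^ϑ(x)_i‖_∞ ≤ 2βR(1 + α(d+4)W^k R^{k+1} β^k + R(αW+1))‖θ−ϑ‖_∞`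
(paper numbering: layer `k+1` here corresponds to `J_k, H_k` with exponents
`W^{k−1}, R^k, β^{k−1}`). -/
theorem nn_jac_hess_lipschitz_in_params
    (d L W : ℕ) (hL : 2 ≤ L) (hW : 2 ≤ W) (R : ℝ) (hR : 1 ≤ R)
    (a b : ℝ) (hab : a < b)
    (σ : ℝ → ℝ) (hσ : ContDiff ℝ 3 σ)
    (hσbd : BddAbove (Set.range fun x => |σ x|))
    (hσ'bd : BddAbove (Set.range fun x => |deriv σ x|))
    (hσ''bd : BddAbove (Set.range fun x => |deriv (deriv σ) x|))
    (hσ'''bd : BddAbove (Set.range fun x => |deriv (deriv (deriv σ)) x|))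
    (l : ℕ → ℕ) (hl0 : l 0 = d) (hlW : ∀ k, 0 < k → l k ≤ W)
    (A B : NNParams l) (hA : A.inCube L R) (hB : B.inCube L R)
    (α β : ℝ)
    (hα : α = max 1 (max |a| (max |b| (⨆ x : ℝ, |σ x|))))
    (hβ : β = max 1 (max (⨆ x : ℝ, |deriv σ x|)
      (max (⨆ x : ℝ, |deriv (deriv σ) x|) (⨆ x : ℝ, |deriv (deriv (deriv σ)) x|)))) :
    ∀ k : ℕ, k < L →
      ∀ x : Fin (l 0) → ℝ, (∀ i, x i ∈ Set.Icc a b) →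
        (∀ (i : Fin (l (k + 1))) (j : Fin (l k)),
          |layerJac σ L A k x i j - layerJac σ L B k x i j|
            ≤ β * (1 + α * (d + 4) * (W : ℝ) ^ k * R ^ (k + 1) * β ^ k
                + R * (α * W + 1)) * paramDist L A B) ∧
        (∀ (i : Fin (l (k + 1))) (j j' : Fin (l k)),
          |layerHess σ L A k x i j j' - layerHess σ L B k x i j j'|
            ≤ 2 * β * R * (1 + α * (d + 4) * (W : ℝ) ^ k * R ^ (k + 1) * β ^ k
                + R * (α * W + 1)) * paramDist L A B) :=
  nn_jac_hess_lipschitz_in_params_general d L W hW R hR a b σ hσ hσbd hσ'bd hσ''bd hσ'''bd l hl0 hlW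
    A B hA hB α β hα hβ
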